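/- For every real β > 1 and every integer k ≥ 0, |W_β'(β^k)| ≥ |W_β(β^{-1})| · (β-1)^k · β^{-k} · β^{k(k-1)/2}. -/

import Mathlib

/-- `Wprod β z = ∏_{j=0}^∞ (1 - z·β^{-j})`, the entire function from the context. -/
noncomputable def Wprod (β : ℝ) (z : ℂ) : ℂ := ∏' j : ℕ, (1 - z / (β : ℂ) ^ j)

/-!
Splitting off the first `k + 1` factors, `W_β(z) = P(z) (1 - z/β^k) T(z)` with
`P(z) = ∏_{i<k} (1 - z/β^i)` and an entire tail product `T` satisfying `T(β^k) = W_β(β⁻¹)`.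
As the middle factor vanishes at `β^k`, `W_β'(β^k) = -β^{-k} P(β^k) W_β(β⁻¹)`, and
`|P(β^k)| = ∏_{j<k} (β^{j+1} - 1) ≥ ∏_{j<k} (β - 1) β^j = (β - 1)^k β^{k(k-1)/2}`.
-/

open Finset

theorem differentiable_tprod_one_sub_mul {a : ℕ → ℂ} (ha : Summable fun m ↦ ‖a m‖) :
    Differentiable ℂ fun z ↦ ∏' m, (1 - z * a m) := by
  intro z₀
  set U := Metric.ball (0 : ℂ) (‖z₀‖ + 1)
  have hU : U ∈ nhds z₀ := Metric.isOpen_ball.mem_nhds (by simp)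
  have hprod : HasProdLocallyUniformlyOn (fun m z ↦ 1 + -(z * a m))
      (fun z ↦ ∏' m, (1 + -(z * a m))) U := by
    refine (ha.mul_left (‖z₀‖ + 1)).hasProdLocallyUniformlyOn_nat_one_add Metric.isOpen_ball
      (.of_forall fun m z hz ↦ ?_) fun m ↦ by fun_prop
    rw [norm_neg, norm_mul]
    exact mul_le_mul_of_nonneg_right (mem_ball_zero_iff.mp hz).le (norm_nonneg _)
  simp_rw [sub_eq_add_neg]
  exact (hprod.differentiableOn (.of_forall fun s ↦ by
    simpa [prod_fn] using DifferentiableOn.finsetProd fun _ _ ↦ by fun_prop)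
    Metric.isOpen_ball).differentiableAt hU

theorem prod_range_one_sub_pow_div_pow {K : Type*} [Field K] {b : K} (hb : b ≠ 0) (k : ℕ) :
    ∏ i ∈ range k, (1 - b ^ k / b ^ i) = ∏ j ∈ range k, (1 - b ^ (j + 1)) := by
  rw [← prod_range_reflect]
  refine prod_congr rfl fun i hi ↦ ?_
  have hik := mem_range.mp hi
  rw [div_eq_mul_inv, ← pow_sub₀ _ hb (by omega)]
  congr 3
  omega

theorem norm_prod_range_one_sub_pow_succ {β : ℝ} (hβ : 1 ≤ β) (k : ℕ) :
    ‖∏ j ∈ range k, (1 - (β : ℂ) ^ (j + 1))‖ = ∏ j ∈ range k, (β ^ (j + 1) - 1) := by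
  rw [norm_prod]
  refine prod_congr rfl fun j _ ↦ ?_
  rw [← Complex.ofReal_pow, ← Complex.ofReal_one, ← Complex.ofReal_sub, Complex.norm_real,
    Real.norm_eq_abs, abs_sub_comm, abs_of_nonneg (sub_nonneg.mpr (one_le_pow₀ hβ))]

theorem sub_one_pow_mul_pow_le_prod_range_pow_succ_sub_one {β : ℝ} (hβ : 1 ≤ β) (k : ℕ) :
    (β - 1) ^ k * β ^ (k * (k - 1) / 2) ≤ ∏ j ∈ range k, (β ^ (j + 1) - 1) := by
  rw [← sum_range_id, ← prod_pow_eq_pow_sum, ← card_range k, ← prod_const, card_range,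
    ← prod_mul_distrib]
  refine prod_le_prod (fun j _ ↦ by have := one_le_pow₀ (n := j) hβ; nlinarith) fun j _ ↦ ?_
  have := one_le_pow₀ (n := j) hβ
  rw [pow_succ]
  nlinarith

section Wprod

variable {β : ℝ}

theorem summable_norm_inv_pow_add (hβ : 1 < β) (n : ℕ) :
    Summable fun m : ℕ ↦ ‖((β : ℂ) ^ (m + n))⁻¹‖ := by
  have hq : ‖(β : ℂ)⁻¹‖ < 1 := by
    rw [norm_inv, Complex.norm_real, Real.norm_of_nonneg (by linarith)]
    exact inv_lt_one_of_one_lt₀ hβ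
  simp_rw [norm_inv, norm_pow, ← inv_pow, ← norm_inv]
  exact (summable_nat_add_iff n).mpr (summable_geometric_of_lt_one (norm_nonneg _) hq)

theorem differentiable_tprod_one_sub_div_pow_add (hβ : 1 < β) (n : ℕ) :
    Differentiable ℂ fun z ↦ ∏' m, (1 - z / (β : ℂ) ^ (m + n)) := by
  simp_rw [div_eq_mul_inv]
  exact differentiable_tprod_one_sub_mul (summable_norm_inv_pow_add hβ n)

theorem Wprod_eq_prod_range_mul_tprod (hβ : 1 < β) (n : ℕ) (z : ℂ) :
    Wprod β z = (∏ i ∈ range n, (1 - z / (β : ℂ) ^ i)) * ∏' m, (1 - z / (β : ℂ) ^ (m + n)) := by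
  have htail : Multipliable fun m ↦ 1 + -(z / (β : ℂ) ^ (m + n)) := by
    refine multipliable_one_add_of_summable ?_
    simpa [div_eq_mul_inv] using (summable_norm_inv_pow_add hβ n).mul_left ‖z‖
  simp_rw [← sub_eq_add_neg] at htail
  exact (htail.prod_mul_tprod_nat_mul' (f := fun j ↦ 1 - z / (β : ℂ) ^ j)).symm

theorem hasDerivAt_Wprod_pow (hβ : 1 < β) (k : ℕ) :
    HasDerivAt (Wprod β)
      ((∏ i ∈ range k, (1 - (β : ℂ) ^ k / (β : ℂ) ^ i)) * -((β : ℂ) ^ k)⁻¹ * Wprod β (β : ℂ)⁻¹)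
      ((β : ℂ) ^ k) := by
  have hb : (β : ℂ) ≠ 0 := Complex.ofReal_ne_zero.mpr (by linarith)
  set P : ℂ → ℂ := fun z ↦ ∏ i ∈ range k, (1 - z / (β : ℂ) ^ i)
  set T : ℂ → ℂ := fun z ↦ ∏' m, (1 - z / (β : ℂ) ^ (m + (k + 1)))
  have hW : Wprod β = fun z ↦ (P z * (1 - z / (β : ℂ) ^ k)) * T z := by
    funext z
    rw [Wprod_eq_prod_range_mul_tprod hβ (k + 1), prod_range_succ]
  have hfactor : HasDerivAt (fun z : ℂ ↦ 1 - z / (β : ℂ) ^ k) (-((β : ℂ) ^ k)⁻¹) ((β : ℂ) ^ k) := by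
    simpa [div_eq_mul_inv] using ((hasDerivAt_id _).mul_const ((β : ℂ) ^ k)⁻¹).const_sub 1
  have hP : DifferentiableAt ℂ P ((β : ℂ) ^ k) := by
    simp only [P]
    fun_prop (disch := exact pow_ne_zero _ hb)
  have hT : T ((β : ℂ) ^ k) = Wprod β (β : ℂ)⁻¹ := by
    refine tprod_congr fun m ↦ ?_
    rw [pow_add, pow_succ]
    field_simp
  rw [← hT, hW]
  have hTdiff : DifferentiableAt ℂ T ((β : ℂ) ^ k) :=
    (differentiable_tprod_one_sub_div_pow_add hβ (k + 1)).differentiableAt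
  refine ((hP.hasDerivAt.mul hfactor).mul hTdiff.hasDerivAt).congr_deriv ?_
  simp only [Pi.mul_apply, div_self (pow_ne_zero k hb), sub_self, mul_zero, zero_mul, add_zero,
    zero_add]
  rfl

end Wprod

/-- for every real β > 1 and every k ∈ ℕ,
|W_β'(β^k)| ≥ |W_β(β^{-1})| · (β-1)^k · β^{-k} · β^{k(k-1)/2}. -/
theorem statement3 (β : ℝ) (hβ : 1 < β) (k : ℕ) :
    ‖Wprod β ((β : ℂ)⁻¹)‖ * (β - 1) ^ k * (β ^ k)⁻¹ * β ^ (k * (k - 1) / 2)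
      ≤ ‖deriv (Wprod β) ((β : ℂ) ^ k)‖ := by
  have hb : (β : ℂ) ≠ 0 := Complex.ofReal_ne_zero.mpr (by linarith)
  rw [(hasDerivAt_Wprod_pow hβ k).deriv, prod_range_one_sub_pow_div_pow hb, norm_mul, norm_mul,
    norm_prod_range_one_sub_pow_succ hβ.le, norm_neg, norm_inv, norm_pow, Complex.norm_real,
    Real.norm_of_nonneg (by linarith)]
  calc ‖Wprod β (β : ℂ)⁻¹‖ * (β - 1) ^ k * (β ^ k)⁻¹ * β ^ (k * (k - 1) / 2)
      = (β - 1) ^ k * β ^ (k * (k - 1) / 2) * ((β ^ k)⁻¹ * ‖Wprod β (β : ℂ)⁻¹‖) := by ring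
    _ ≤ (∏ j ∈ range k, (β ^ (j + 1) - 1)) * ((β ^ k)⁻¹ * ‖Wprod β (β : ℂ)⁻¹‖) := by
      gcongr
      exact sub_one_pow_mul_pow_le_prod_range_pow_succ_sub_one hβ.le k
    _ = _ := by ring
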